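/- arXiv:2007.09736 — 4 statements merged into one kernel-verified Lean document; each statement's English description precedes it below -/
import Mathlib

section
/- The 4-cube graph Q₄ admits a 1-factorization 𝓕 into four perfect matchings such that every 4-cycle of Q₄ is rainbow, i.e., each of the four edges of every 4-cycle lies in a different one of the four perfect matchings (so the four edges are in bijective correspondence with the four 1-factors). -/
/-- The 4-cube graph on vertex set `Fin 4 → ZMod 2`: two vertices are adjacent
iff they differ in exactly one coordinate. -/
def Q4 : SimpleGraph (Fin 4 → ZMod 2) where
  Adj x y := (Finset.univ.filter fun i => x i ≠ y i).card = 1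
  symm := by
    constructor
    intro x y h
    simpa [ne_comm] using h
  loopless := by constructor; intro x; simp

variable {V : Type*}

/-- `M` is (the edge set of) a perfect matching of `G`. -/
def IsPM (G : SimpleGraph V) (M : Set (Sym2 V)) : Prop :=
  M ⊆ G.edgeSet ∧ ∀ v : V, ∃! e, e ∈ M ∧ v ∈ e

/-- `F` is a 1-factorization of `G` into four perfect matchings:
each `F i` is a perfect matching and every edge of `G` lies in exactly one `F i`. -/
def IsOneFactorization (G : SimpleGraph V) (F : Fin 4 → Set (Sym2 V)) : Prop :=
  (∀ i, IsPM G (F i)) ∧ ∀ e ∈ G.edgeSet, ∃! i, e ∈ F i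

/-- `a, b, c, d` are the successive vertices of a 4-cycle of `G`. -/
def IsC4 (G : SimpleGraph V) (a b c d : V) : Prop :=
  a ≠ b ∧ a ≠ c ∧ a ≠ d ∧ b ≠ c ∧ b ≠ d ∧ c ≠ d ∧
  G.Adj a b ∧ G.Adj b c ∧ G.Adj c d ∧ G.Adj d a

/-!
Label the coordinate directions of the cube by the elements of `𝔽₄` (more generally, of a finite
field `K` of characteristic two) through a bijection `φ`, and fix `ω ∉ {0, 1}`. The edge
`{x, x + eᵢ}` receives the colour `ω φᵢ + ∑ₖ xₖ (φᵢ + φₖ)`. Moving `x` along `eⱼ` shifts this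
colour by `φᵢ + φⱼ`, which vanishes for `j = i`, so the colour does not depend on the endpoint.
At a vertex `x` the colours are `(ω + ∑ₖ xₖ) φᵢ + ∑ₖ xₖ φₖ`, an affine bijection of `φᵢ` since
`ω + ∑ₖ xₖ ∉ {0, 1}`; hence every colour class is a perfect matching. On the square
`x, x + eᵢ, x + eᵢ + eⱼ, x + eⱼ` with `u = φᵢ + φⱼ ≠ 0` the colours are `p, q + u, p + u, q`
with `p + q = (ω + ∑ₖ xₖ) u ∉ {0, u}`, so they are pairwise distinct.
-/

open Finset Function

section Hypercube

variable {ι : Type*} [DecidableEq ι]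

lemma add_single_add_single_self (x : ι → ZMod 2) (i : ι) :
    x + Pi.single i 1 + Pi.single i 1 = x := by
  rw [add_assoc, ← Pi.single_add, CharTwo.add_self_eq_zero, Pi.single_zero, add_zero]

lemma single_one_injective : Injective fun i : ι => (Pi.single i 1 : ι → ZMod 2) := by
  intro i j h
  simpa [Pi.single_apply] using congrFun h i

variable (ι) in
def hypercube : SimpleGraph (ι → ZMod 2) where
  Adj x y := ∃ i, y = x + Pi.single i 1
  symm := ⟨fun x y ⟨i, h⟩ => ⟨i, by rw [h, add_single_add_single_self]⟩⟩
  loopless := ⟨fun x ⟨i, h⟩ => one_ne_zero (α := ZMod 2) (by simpa using congrFun h i)⟩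

@[simp]
lemma hypercube_adj {x y : ι → ZMod 2} : (hypercube ι).Adj x y ↔ ∃ i, y = x + Pi.single i 1 :=
  Iff.rfl

lemma card_filter_ne_eq_one_iff [Fintype ι] (x y : ι → ZMod 2) :
    #{i | x i ≠ y i} = 1 ↔ ∃ i, y = x + Pi.single i 1 := by
  have hne : ∀ a b : ZMod 2, a ≠ b ↔ b = a + 1 := by decide
  simp only [card_eq_one, Finset.ext_iff, mem_filter, mem_univ, true_and, mem_singleton,
    funext_iff, Pi.add_apply, Pi.single_apply]
  refine exists_congr fun i => forall_congr' fun k => ?_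
  split_ifs with hk <;> simp [hne, hk, eq_comm]

lemma Q4_eq_hypercube : Q4 = hypercube (Fin 4) := by
  ext x y
  rw [hypercube_adj, ← card_filter_ne_eq_one_iff]
  rfl

lemma IsC4.exists_eq_square {a b c d : ι → ZMod 2} (h : IsC4 (hypercube ι) a b c d) :
    ∃ i j, i ≠ j ∧ b = a + Pi.single i 1 ∧ c = a + Pi.single i 1 + Pi.single j 1 ∧
      d = a + Pi.single j 1 := by
  obtain ⟨-, hac, -, -, hbd, -, ⟨i, rfl⟩, ⟨j, rfl⟩, ⟨k, rfl⟩, hda⟩ := h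
  obtain ⟨l, hl⟩ := hypercube_adj.mp hda.symm
  have hij : i ≠ j := by
    rintro rfl
    exact hac (add_single_add_single_self a i).symm
  refine ⟨i, j, hij, rfl, rfl, ?_⟩
  obtain rfl | hki := eq_or_ne k i
  · rw [add_right_comm, add_single_add_single_self]
  · -- otherwise `d` differs from `a` in coordinate `i`, which forces `d = b`
    have hli : l = i := by simpa [Pi.single_apply, hij, hki.symm, eq_comm] using congrFun hl i
    subst hli
    exact absurd hl.symm hbd

end Hypercube

section Coloring

variable {ι K : Type*} [Fintype ι] [Field K] [Algebra (ZMod 2) K] (ω : K) (φ : ι → K)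

def edgeColor (x : ι → ZMod 2) (i : ι) : K :=
  ω * φ i + ∑ k, x k • (φ i + φ k)

lemma edgeColor_add_edgeColor (x : ι → ZMod 2) (i j : ι) :
    edgeColor ω φ x i + edgeColor ω φ x j =
      (ω + algebraMap (ZMod 2) K (∑ k, x k)) * (φ i + φ j) := by
  have := charP_of_injective_algebraMap' (ZMod 2) 2 (A := K)
  have hφ : ∀ k, φ i + φ k + (φ j + φ k) = φ i + φ j := fun k => by
    rw [add_add_add_comm, CharTwo.add_self_eq_zero, add_zero]
  unfold edgeColor
  rw [add_add_add_comm, ← mul_add, ← sum_add_distrib]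
  simp_rw [← smul_add, hφ]
  rw [← sum_smul, Algebra.smul_def, add_mul]

variable {ω} in
lemma add_algebraMap_ne_zero_and_ne_one (hω₀ : ω ≠ 0) (hω₁ : ω ≠ 1) (t : ZMod 2) :
    ω + algebraMap (ZMod 2) K t ≠ 0 ∧ ω + algebraMap (ZMod 2) K t ≠ 1 := by
  have := charP_of_injective_algebraMap' (ZMod 2) 2 (A := K)
  obtain rfl | rfl : t = 0 ∨ t = 1 := by decide +revert
  · simpa using ⟨hω₀, hω₁⟩
  · simpa [CharTwo.add_eq_zero] using ⟨hω₁, hω₀⟩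

variable {ω φ} in
lemma edgeColor_injective (hω₀ : ω ≠ 0) (hω₁ : ω ≠ 1) (hφ : Injective φ) (x : ι → ZMod 2) :
    Injective (edgeColor ω φ x) := by
  have := charP_of_injective_algebraMap' (ZMod 2) 2 (A := K)
  intro i j h
  have hsum := edgeColor_add_edgeColor ω φ x i j
  rw [h, CharTwo.add_self_eq_zero, eq_comm, mul_eq_zero] at hsum
  exact hφ (CharTwo.add_eq_zero.mp
    (hsum.resolve_left (add_algebraMap_ne_zero_and_ne_one hω₀ hω₁ _).1))

variable [DecidableEq ι]

lemma edgeColor_add_single (x : ι → ZMod 2) (i j : ι) :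
    edgeColor ω φ (x + Pi.single j 1) i = edgeColor ω φ x i + (φ i + φ j) := by
  simp only [edgeColor, Pi.add_apply, add_smul, sum_add_distrib, Pi.single_apply, ite_smul,
    one_smul, zero_smul, sum_ite_eq', mem_univ, if_true]
  ring

lemma edgeColor_add_single_self (x : ι → ZMod 2) (i : ι) :
    edgeColor ω φ (x + Pi.single i 1) i = edgeColor ω φ x i := by
  have := charP_of_injective_algebraMap' (ZMod 2) 2 (A := K)
  rw [edgeColor_add_single, CharTwo.add_self_eq_zero, add_zero]

def colorClass (c : K) : Set (Sym2 (ι → ZMod 2)) :=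
  {e | ∃ x i, e = s(x, x + Pi.single i 1) ∧ edgeColor ω φ x i = c}

lemma mk_mem_colorClass (x : ι → ZMod 2) (i : ι) :
    s(x, x + Pi.single i 1) ∈ colorClass ω φ (edgeColor ω φ x i) :=
  ⟨x, i, rfl, rfl⟩

variable {ω φ} in
lemma exists_eq_of_mem_colorClass {c : K} {e : Sym2 (ι → ZMod 2)} {v : ι → ZMod 2}
    (he : e ∈ colorClass ω φ c) (hv : v ∈ e) :
    ∃ i, e = s(v, v + Pi.single i 1) ∧ edgeColor ω φ v i = c := by
  obtain ⟨x, i, rfl, rfl⟩ := he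
  rcases Sym2.mem_iff.mp hv with rfl | rfl
  · exact ⟨i, rfl, rfl⟩
  · exact ⟨i, by rw [add_single_add_single_self, Sym2.eq_swap], edgeColor_add_single_self ω φ x i⟩

lemma colorClass_subset_edgeSet (c : K) : colorClass ω φ c ⊆ (hypercube ι).edgeSet := by
  rintro _ ⟨x, i, rfl, -⟩
  exact ⟨i, rfl⟩

variable {ω φ} in
lemma isPM_colorClass (hω₀ : ω ≠ 0) (hω₁ : ω ≠ 1) (hφ : Bijective φ) (c : K) :
    IsPM (hypercube ι) (colorClass ω φ c) := by
  refine ⟨colorClass_subset_edgeSet ω φ c, fun v => ?_⟩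
  have hinj := edgeColor_injective hω₀ hω₁ hφ.1 v
  obtain ⟨i, hi⟩ := (Finite.injective_iff_surjective_of_equiv (Equiv.ofBijective φ hφ)).mp hinj c
  refine ⟨s(v, v + Pi.single i 1), ⟨hi ▸ mk_mem_colorClass ω φ v i, Sym2.mem_mk_left _ _⟩, ?_⟩
  rintro e ⟨he, hve⟩
  obtain ⟨j, rfl, hj⟩ := exists_eq_of_mem_colorClass he hve
  rw [hinj (hj.trans hi.symm)]

lemma existsUnique_mem_colorClass {e : Sym2 (ι → ZMod 2)} (he : e ∈ (hypercube ι).edgeSet) :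
    ∃! c, e ∈ colorClass ω φ c := by
  induction e using Sym2.ind with
  | _ x y =>
    rw [SimpleGraph.mem_edgeSet, hypercube_adj] at he
    obtain ⟨i, rfl⟩ := he
    refine ⟨edgeColor ω φ x i, mk_mem_colorClass ω φ x i, fun c hc => ?_⟩
    obtain ⟨j, hj, rfl⟩ := exists_eq_of_mem_colorClass hc (Sym2.mem_mk_left _ _)
    rw [single_one_injective (add_left_cancel (Sym2.congr_right.mp hj))]

variable {ω φ} in
lemma injective_edgeColor_square (hω₀ : ω ≠ 0) (hω₁ : ω ≠ 1) (hφ : Injective φ)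
    (x : ι → ZMod 2) {i j : ι} (hij : i ≠ j) :
    Injective ![edgeColor ω φ x i, edgeColor ω φ (x + Pi.single i 1) j,
      edgeColor ω φ (x + Pi.single j 1) i, edgeColor ω φ x j] := by
  have := charP_of_injective_algebraMap' (ZMod 2) 2 (A := K)
  have hu : φ i + φ j ≠ 0 := fun h => hij (hφ (CharTwo.add_eq_zero.mp h))
  obtain ⟨hα₀, hα₁⟩ := add_algebraMap_ne_zero_and_ne_one hω₀ hω₁ (∑ k, x k)
  have hsum := edgeColor_add_edgeColor ω φ x i j
  rw [edgeColor_add_single, edgeColor_add_single, add_comm (φ j)]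
  generalize edgeColor ω φ x i = p, edgeColor ω φ x j = q, φ i + φ j = u at *
  have hpq₀ : p + q ≠ 0 := hsum ▸ mul_ne_zero hα₀ hu
  have hpq₁ : p + q ≠ u := hsum ▸ fun h => hα₁ (mul_eq_right₀ hu |>.mp h)
  simp only [Matrix.vecCons, Fin.cons_injective_iff]
  simp only [Set.mem_range, Fin.exists_fin_succ, Fin.cons_zero, Fin.cons_succ, Injective,
    IsEmpty.forall_iff, Fin.exists_fin_zero]
  grind

variable {ω φ} in
lemma IsC4.exists_rainbow (hω₀ : ω ≠ 0) (hω₁ : ω ≠ 1) (hφ : Injective φ)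
    {a b c d : ι → ZMod 2} (h : IsC4 (hypercube ι) a b c d) :
    ∃ C : Fin 4 → K, Injective C ∧ s(a, b) ∈ colorClass ω φ (C 0) ∧
      s(b, c) ∈ colorClass ω φ (C 1) ∧ s(c, d) ∈ colorClass ω φ (C 2) ∧
      s(d, a) ∈ colorClass ω φ (C 3) := by
  obtain ⟨i, j, hij, rfl, rfl, rfl⟩ := h.exists_eq_square
  refine ⟨_, injective_edgeColor_square hω₀ hω₁ hφ a hij, mk_mem_colorClass ..,
    mk_mem_colorClass .., ?_, ?_⟩
  · rw [Sym2.eq_swap, add_right_comm]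
    exact mk_mem_colorClass ..
  · rw [Sym2.eq_swap]
    exact mk_mem_colorClass ..

end Coloring

lemma exists_ne_zero_ne_one (K : Type*) [Field K] [Finite K] (hK : 2 < Nat.card K) :
    ∃ ω : K, ω ≠ 0 ∧ ω ≠ 1 := by
  by_contra! h
  have : (Set.univ : Set K) ⊆ {0, 1} := fun ω _ => by by_cases hω : ω = 0 <;> simp [hω, h ω]
  have := Set.ncard_le_ncard this
  rw [Set.ncard_univ] at this
  linarith [Set.ncard_pair (zero_ne_one (α := K))]

theorem stmt0 : ∃ F : Fin 4 → Set (Sym2 (Fin 4 → ZMod 2)),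
    IsOneFactorization Q4 F ∧
    ∀ a b c d : Fin 4 → ZMod 2, IsC4 Q4 a b c d →
      ∃ g : Fin 4 → Fin 4, Function.Bijective g ∧
        s(a, b) ∈ F (g 0) ∧ s(b, c) ∈ F (g 1) ∧ s(c, d) ∈ F (g 2) ∧ s(d, a) ∈ F (g 3) := by
  have hcard : Nat.card (GaloisField 2 2) = 4 := GaloisField.card 2 2 two_ne_zero
  obtain ⟨ω, hω₀, hω₁⟩ := exists_ne_zero_ne_one (GaloisField 2 2) (by omega)
  let φ : Fin 4 ≃ GaloisField 2 2 := ((Finite.equivFin _).trans (finCongr hcard)).symm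
  rw [Q4_eq_hypercube]
  refine ⟨fun i => colorClass ω φ (φ i),
    ⟨fun i => isPM_colorClass hω₀ hω₁ φ.bijective _, fun e he => ?_⟩, fun a b c d h => ?_⟩
  · exact φ.symm.existsUnique_congr_left.mp (existsUnique_mem_colorClass ω φ he)
  · obtain ⟨C, hC, h₀, h₁, h₂, h₃⟩ := h.exists_rainbow hω₀ hω₁ φ.injective
    refine ⟨φ.symm ∘ C, Finite.injective_iff_bijective.mp (φ.symm.injective.comp hC), ?_⟩
    simpa using ⟨h₀, h₁, h₂, h₃⟩
end

section
/- There exists a 1-factorization 𝓕 of the 4-cube graph Q₄ that is rainbow on every 4-cycle and such that for any two distinct 1-factors of 𝓕, their union is a spanning 2-regular subgraph of Q₄ that is the disjoint union of two 8-cycles, and moreover along each of these 8-cycles any two vertices at distance 4 apart on the cycle are antipodal in Q₄ (i.e., they differ in all four coordinates). -/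
variable {V : Type*}

/-- The antipode vector `(1,1,1,1)` of the 4-cube. -/
def antip : Fin 4 → ZMod 2 := fun _ => 1

open Function

section EdgeColouring

variable {ι : Type*} {G : SimpleGraph V} {col : V → V → ι}

def colourClass (G : SimpleGraph V) (col : V → V → ι) (i : ι) : Set (Sym2 V) :=
  {e | ∃ x y, G.Adj x y ∧ col x y = i ∧ e = s(x, y)}

theorem mem_colourClass (hsymm : ∀ x y, G.Adj x y → col x y = col y x) {x y : V} {i : ι}
    (hxy : G.Adj x y) : s(x, y) ∈ colourClass G col i ↔ col x y = i := by
  refine ⟨?_, fun h => ⟨x, y, hxy, h, rfl⟩⟩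
  rintro ⟨x', y', hxy', rfl, he⟩
  rcases Sym2.eq_iff.1 he with ⟨rfl, rfl⟩ | ⟨rfl, rfl⟩
  · rfl
  · exact hsymm _ _ hxy

theorem isOneFactorization_colourClass {col : V → V → Fin 4}
    (hsymm : ∀ x y, G.Adj x y → col x y = col y x)
    (hunique : ∀ x i, ∃! y, G.Adj x y ∧ col x y = i) :
    IsOneFactorization G (colourClass G col) := by
  refine ⟨fun i => ⟨?_, fun x => ?_⟩, fun e he => ?_⟩
  · rintro _ ⟨x, y, hxy, -, rfl⟩
    exact hxy
  · obtain ⟨y, ⟨hxy, hcol⟩, hy⟩ := hunique x i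
    refine ⟨s(x, y), ⟨(mem_colourClass hsymm hxy).2 hcol, Sym2.mem_mk_left x y⟩, ?_⟩
    rintro e ⟨he, hxe⟩
    rw [← Sym2.other_spec hxe] at he ⊢
    have hadj : G.Adj x (Sym2.Mem.other hxe) := by
      obtain ⟨_, _, h, -, hs⟩ := he
      rwa [← G.mem_edgeSet, hs]
    rw [hy _ ⟨hadj, (mem_colourClass hsymm hadj).1 he⟩]
  · induction e using Sym2.ind with
    | _ x y =>
      exact ⟨col x y, (mem_colourClass hsymm he).2 rfl,
        fun j hj => ((mem_colourClass hsymm he).1 hj).symm⟩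

theorem exists_bijective_colourClass_of_isC4 {col : V → V → Fin 4}
    (hsymm : ∀ x y, G.Adj x y → col x y = col y x) {a b c d : V} (h : IsC4 G a b c d)
    (hinj : Injective ![col a b, col b c, col c d, col d a]) :
    ∃ g : Fin 4 → Fin 4, Bijective g ∧
      s(a, b) ∈ colourClass G col (g 0) ∧ s(b, c) ∈ colourClass G col (g 1) ∧
      s(c, d) ∈ colourClass G col (g 2) ∧ s(d, a) ∈ colourClass G col (g 3) := by
  obtain ⟨-, -, -, -, -, -, hab, hbc, hcd, hda⟩ := h
  exact ⟨_, Finite.injective_iff_bijective.1 hinj, (mem_colourClass hsymm hab).2 rfl,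
    (mem_colourClass hsymm hbc).2 rfl, (mem_colourClass hsymm hcd).2 rfl,
    (mem_colourClass hsymm hda).2 rfl⟩

def IsAlternatingClosedWalk (G : SimpleGraph V) (col : V → V → ι) (i j : ι) {n : ℕ}
    (v : ZMod n → V) : Prop :=
  ∀ k, G.Adj (v k) (v (k + 1)) ∧ (col (v k) (v (k + 1)) = i ∨ col (v k) (v (k + 1)) = j) ∧
    col (v k) (v (k + 1)) ≠ col (v (k + 1)) (v (k + 2))

variable {i j : ι} {n : ℕ} {v w : ZMod n → V}

theorem IsAlternatingClosedWalk.mem_colourClass_union (hv : IsAlternatingClosedWalk G col i j v)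
    (k : ZMod n) : s(v k, v (k + 1)) ∈ colourClass G col i ∪ colourClass G col j := by
  obtain ⟨hadj, hcol | hcol, -⟩ := hv k
  exacts [Or.inl ⟨_, _, hadj, hcol, rfl⟩, Or.inr ⟨_, _, hadj, hcol, rfl⟩]

theorem IsAlternatingClosedWalk.exists_eq_edge (hv : IsAlternatingClosedWalk G col i j v)
    (hsymm : ∀ x y, G.Adj x y → col x y = col y x)
    (hunique : ∀ x i, ∃! y, G.Adj x y ∧ col x y = i) {k : ZMod n} {y : V}
    (hy : G.Adj (v k) y) (hcol : col (v k) y = i ∨ col (v k) y = j) :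
    ∃ m, s(v k, y) = s(v m, v (m + 1)) := by
  obtain ⟨hprev, hprevc, hne⟩ := hv (k - 1)
  obtain ⟨hnext, hnextc, -⟩ := hv k
  rw [sub_add_cancel, show k - 1 + 2 = k + 1 by ring] at *
  rw [hsymm _ _ hprev] at hprevc hne
  have huniq : ∀ z, G.Adj (v k) z → col (v k) z = col (v k) y → y = z :=
    fun z hz hcz => (hunique _ _).unique ⟨hy, rfl⟩ ⟨hz, hcz⟩
  by_cases h : col (v k) (v (k + 1)) = col (v k) y
  · exact ⟨k, by rw [huniq _ hnext h]⟩
  · refine ⟨k - 1, ?_⟩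
    rw [huniq (v (k - 1)) hprev.symm (by grind), sub_add_cancel, Sym2.eq_swap]

theorem colourClass_union_eq (hsymm : ∀ x y, G.Adj x y → col x y = col y x)
    (hunique : ∀ x i, ∃! y, G.Adj x y ∧ col x y = i)
    (hv : IsAlternatingClosedWalk G col i j v) (hw : IsAlternatingClosedWalk G col i j w)
    (hsurj : Surjective (Sum.elim v w)) :
    colourClass G col i ∪ colourClass G col j =
      {e | ∃ k, e = s(v k, v (k + 1))} ∪ {e | ∃ k, e = s(w k, w (k + 1))} := by
  have key : ∀ x y, G.Adj x y → (col x y = i ∨ col x y = j) →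
      s(x, y) ∈ {e | ∃ k, e = s(v k, v (k + 1))} ∪ {e | ∃ k, e = s(w k, w (k + 1))} := by
    intro x y hxy hcol
    obtain ⟨k | k, rfl⟩ := hsurj x
    exacts [Or.inl (hv.exists_eq_edge hsymm hunique hxy hcol),
      Or.inr (hw.exists_eq_edge hsymm hunique hxy hcol)]
  ext e
  constructor
  · rintro (⟨x, y, hxy, hcol, rfl⟩ | ⟨x, y, hxy, hcol, rfl⟩)
    exacts [key x y hxy (Or.inl hcol), key x y hxy (Or.inr hcol)]
  · rintro (⟨k, rfl⟩ | ⟨k, rfl⟩)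
    exacts [hv.mem_colourClass_union k, hw.mem_colourClass_union k]

end EdgeColouring

abbrev Cube := Fin 4 → ZMod 2

instance : DecidableRel Q4.Adj := fun x y =>
  inferInstanceAs (Decidable ((Finset.univ.filter fun i => x i ≠ y i).card = 1))

/- `Fin 4` encodes `𝔽₄ = 𝔽₂[ω]` by `a + bω ↦ a + 2b`, so that addition is `^^^` and `mulOmega`
is multiplication by `ω`. -/
def mulOmega : Fin 4 → Fin 4 := ![0, 2, 3, 1]

def weight (x : Cube) : Fin 4 :=
  (if x 1 = 1 then 1 else 0) ^^^ (if x 2 = 1 then 2 else 0) ^^^ (if x 3 = 1 then 3 else 0)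

def parity (x : Cube) : ZMod 2 := x 0 + x 1 + x 2 + x 3

def edgeColour (x y : Cube) : Fin 4 :=
  (if parity x = 0 then weight x else weight y) ^^^ mulOmega (weight (x + y))

-- Solves `i = weight x + ω d` (`x` even) or `i = weight x + ω² d` (`x` odd) for the direction `d`.
def neighbourOfColour (x : Cube) (i : Fin 4) : Cube :=
  x + Pi.single (if parity x = 0 then mulOmega (mulOmega (i ^^^ weight x))
    else mulOmega (i ^^^ weight x)) 1

theorem edgeColour_comm : ∀ x y : Cube, Q4.Adj x y → edgeColour x y = edgeColour y x := by
  decide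

theorem adj_neighbourOfColour (x : Cube) (i : Fin 4) :
    Q4.Adj x (neighbourOfColour x i) ∧ edgeColour x (neighbourOfColour x i) = i := by
  revert x i
  decide

theorem eq_neighbourOfColour {x y : Cube} (h : Q4.Adj x y) :
    y = neighbourOfColour x (edgeColour x y) := by
  revert x y
  decide

theorem existsUnique_adj_edgeColour (x : Cube) (i : Fin 4) :
    ∃! y, Q4.Adj x y ∧ edgeColour x y = i :=
  ⟨_, adj_neighbourOfColour x i, fun _ ⟨hxy, hcol⟩ => hcol ▸ eq_neighbourOfColour hxy⟩

theorem exists_eq_neighbourOfColour {x y : Cube} (h : Q4.Adj x y) :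
    ∃ i, y = neighbourOfColour x i :=
  ⟨_, eq_neighbourOfColour h⟩

set_option maxHeartbeats 400000 in
theorem injective_edgeColour_of_isC4_neighbourOfColour : ∀ (a : Cube) (i₁ i₂ i₃ : Fin 4),
    let b := neighbourOfColour a i₁
    let c := neighbourOfColour b i₂
    let d := neighbourOfColour c i₃
    IsC4 Q4 a b c d →
      Injective ![edgeColour a b, edgeColour b c, edgeColour c d, edgeColour d a] := by
  unfold IsC4
  decide

theorem injective_edgeColour_of_isC4 {a b c d : Cube} (h : IsC4 Q4 a b c d) :
    Injective ![edgeColour a b, edgeColour b c, edgeColour c d, edgeColour d a] := by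
  obtain ⟨i₁, rfl⟩ := exists_eq_neighbourOfColour h.2.2.2.2.2.2.1
  obtain ⟨i₂, rfl⟩ := exists_eq_neighbourOfColour h.2.2.2.2.2.2.2.1
  obtain ⟨i₃, rfl⟩ := exists_eq_neighbourOfColour h.2.2.2.2.2.2.2.2.1
  exact injective_edgeColour_of_isC4_neighbourOfColour a i₁ i₂ i₃ h

def alternatingWalk (i j : Fin 4) : ℕ → Cube
  | 0 => 0
  | n + 1 => neighbourOfColour (alternatingWalk i j n) (if n % 2 = 0 then i else j)

def alternatingCycle (i j : Fin 4) (k : ZMod 8) : Cube :=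
  alternatingWalk i j k.val

/- Translating by an even vector `t` adds `weight t` to every colour, so for `weight t = i + j`
it swaps the colours `i` and `j` and maps the `{i, j}`-factor onto itself. -/
def shiftedAlternatingCycle (i j : Fin 4) (k : ZMod 8) : Cube :=
  alternatingCycle i j k + (Pi.single 0 1 + Pi.single (i ^^^ j) 1)

theorem isAlternatingClosedWalk_alternatingCycle {i j : Fin 4} (hij : i ≠ j) :
    IsAlternatingClosedWalk Q4 edgeColour i j (alternatingCycle i j) := by
  unfold IsAlternatingClosedWalk
  revert i j
  decide

theorem isAlternatingClosedWalk_shiftedAlternatingCycle {i j : Fin 4} (hij : i ≠ j) :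
    IsAlternatingClosedWalk Q4 edgeColour i j (shiftedAlternatingCycle i j) := by
  unfold IsAlternatingClosedWalk
  revert i j
  decide

theorem surjective_sumElim_alternatingCycle {i j : Fin 4} (hij : i ≠ j) :
    Surjective (Sum.elim (alternatingCycle i j) (shiftedAlternatingCycle i j)) := by
  revert i j
  decide

theorem alternatingCycle_add_four {i j : Fin 4} (hij : i ≠ j) (k : ZMod 8) :
    alternatingCycle i j (k + 4) = alternatingCycle i j k + antip := by
  revert i j k
  decide

theorem shiftedAlternatingCycle_add_four {i j : Fin 4} (hij : i ≠ j) (k : ZMod 8) :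
    shiftedAlternatingCycle i j (k + 4) = shiftedAlternatingCycle i j k + antip := by
  rw [shiftedAlternatingCycle, shiftedAlternatingCycle, alternatingCycle_add_four hij,
    add_right_comm]

/-- there is a 1-factorization of `Q4`, rainbow on every 4-cycle,
such that the union of any two distinct 1-factors is a spanning 2-regular subgraph
consisting of two disjoint 8-cycles (`v` and `w`, indexed cyclically by `ZMod 8`,
together visiting the 16 vertices bijectively, their 16 edges being exactly
`F i ∪ F j`), and along each of the 8-cycles any two vertices at distance 4 apart
on the cycle are antipodal in `Q4`. -/
theorem stmt3 : ∃ F : Fin 4 → Set (Sym2 (Fin 4 → ZMod 2)),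
    IsOneFactorization Q4 F ∧
    (∀ a b c d : Fin 4 → ZMod 2, IsC4 Q4 a b c d →
      ∃ g : Fin 4 → Fin 4, Function.Bijective g ∧
        s(a, b) ∈ F (g 0) ∧ s(b, c) ∈ F (g 1) ∧ s(c, d) ∈ F (g 2) ∧ s(d, a) ∈ F (g 3)) ∧
    ∀ i j : Fin 4, i ≠ j →
      ∃ v w : ZMod 8 → (Fin 4 → ZMod 2),
        Function.Bijective (Sum.elim v w : ZMod 8 ⊕ ZMod 8 → (Fin 4 → ZMod 2)) ∧
        (∀ k : ZMod 8, s(v k, v (k + 1)) ∈ F i ∪ F j) ∧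
        (∀ k : ZMod 8, s(w k, w (k + 1)) ∈ F i ∪ F j) ∧
        (F i ∪ F j =
          {e | ∃ k : ZMod 8, e = s(v k, v (k + 1))} ∪
          {e | ∃ k : ZMod 8, e = s(w k, w (k + 1))}) ∧
        (∀ k : ZMod 8, v (k + 4) = v k + antip) ∧
        (∀ k : ZMod 8, w (k + 4) = w k + antip) := by
  refine ⟨colourClass Q4 edgeColour,
    isOneFactorization_colourClass edgeColour_comm existsUnique_adj_edgeColour,
    fun a b c d h => exists_bijective_colourClass_of_isC4 edgeColour_comm h
      (injective_edgeColour_of_isC4 h), fun i j hij => ?_⟩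
  have hv := isAlternatingClosedWalk_alternatingCycle hij
  have hw := isAlternatingClosedWalk_shiftedAlternatingCycle hij
  have hsurj := surjective_sumElim_alternatingCycle hij
  exact ⟨alternatingCycle i j, shiftedAlternatingCycle i j,
    (Fintype.bijective_iff_surjective_and_card _).2 ⟨hsurj, rfl⟩,
    hv.mem_colourClass_union, hw.mem_colourClass_union,
    colourClass_union_eq edgeColour_comm existsUnique_adj_edgeColour hv hw hsurj,
    alternatingCycle_add_four hij, shiftedAlternatingCycle_add_four hij⟩
end

section
/- For every 1-factorization of the complete bipartite graph K₄,₄ into four perfect matchings, there exists a 4-cycle of K₄,₄ whose four edges lie in only two of the four perfect matchings; in particular, no 1-factorization of K₄,₄ is rainbow on all 4-cycles (unlike the rainbow 1-factorization of Q₄, whose quotient 1-factorization of K₄,₄ therefore fails to be 4-cycle-rainbow). -/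
variable {V : Type*}

/-- The complete bipartite graph `K₄,₄` with parts `Fin 4` and `Fin 4`. -/
abbrev K44 : SimpleGraph (Fin 4 ⊕ Fin 4) := completeBipartiteGraph (Fin 4) (Fin 4)

/-! Each 1-factor `F i` of `K₄,₄` is the graph of a permutation `σ i` of `Fin 4`, and distinct
factors give permutations that disagree at every point. Two of the four `σ i` have the same sign, so
`(σ j)⁻¹ * σ i` is an even derangement of `Fin 4`, i.e. a double transposition. A 2-cycle `a ↔ a'`
of it gives the 4-cycle `a, σ i a, a', σ i a'`, whose edges alternate between `F i` and `F j`. -/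

open Sum

lemma IsPM.eq_of_mem_of_mem {G : SimpleGraph V} {M : Set (Sym2 V)} (hM : IsPM G M) {v : V}
    {e e' : Sym2 V} (he : e ∈ M) (he' : e' ∈ M) (hv : v ∈ e) (hv' : v ∈ e') : e = e' :=
  (hM.2 v).unique ⟨he, hv⟩ ⟨he', hv'⟩

lemma IsOneFactorization.eq_of_mem_of_mem {G : SimpleGraph V} {F : Fin 4 → Set (Sym2 V)}
    (hF : IsOneFactorization G F) {e : Sym2 V} {i j : Fin 4} (hi : e ∈ F i) (hj : e ∈ F j) :
    i = j :=
  (hF.2 e ((hF.1 i).1 hi)).unique hi hj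

section CompleteBipartite

variable {α β : Type*} {M : Set (Sym2 (α ⊕ β))}

lemma exists_eq_of_mem_edgeSet_completeBipartiteGraph {e : Sym2 (α ⊕ β)}
    (he : e ∈ (completeBipartiteGraph α β).edgeSet) : ∃ a b, e = s(inl a, inr b) := by
  induction e using Sym2.ind with
  | h x y =>
    cases x <;> cases y <;> simp [completeBipartiteGraph] at he ⊢

lemma isC4_completeBipartiteGraph_iff {a a' : α} {b b' : β} :
    IsC4 (completeBipartiteGraph α β) (inl a) (inr b) (inl a') (inr b') ↔ a ≠ a' ∧ b ≠ b' := by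
  simp [IsC4, completeBipartiteGraph]

lemma IsPM.existsUnique_right (hM : IsPM (completeBipartiteGraph α β) M) (a : α) :
    ∃! b, s(inl a, inr b) ∈ M := by
  obtain ⟨e, ⟨heM, hae⟩, -⟩ := hM.2 (inl a)
  obtain ⟨a', b, rfl⟩ := exists_eq_of_mem_edgeSet_completeBipartiteGraph (hM.1 heM)
  obtain rfl : a' = a := by simpa [eq_comm] using hae
  refine ⟨b, heM, fun b' hb' => ?_⟩
  simpa using hM.eq_of_mem_of_mem hb' heM (Sym2.mem_mk_left _ _) (Sym2.mem_mk_left _ _)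

lemma IsPM.existsUnique_left (hM : IsPM (completeBipartiteGraph α β) M) (b : β) :
    ∃! a, s(inl a, inr b) ∈ M := by
  obtain ⟨e, ⟨heM, hbe⟩, -⟩ := hM.2 (inr b)
  obtain ⟨a, b', rfl⟩ := exists_eq_of_mem_edgeSet_completeBipartiteGraph (hM.1 heM)
  obtain rfl : b' = b := by simpa [eq_comm] using hbe
  refine ⟨a, heM, fun a' ha' => ?_⟩
  simpa using hM.eq_of_mem_of_mem ha' heM (Sym2.mem_mk_right _ _) (Sym2.mem_mk_right _ _)

lemma IsPM.exists_equiv (hM : IsPM (completeBipartiteGraph α β) M) :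
    ∃ σ : α ≃ β, ∀ a, s(inl a, inr (σ a)) ∈ M := by
  choose σ hσ huniq using hM.existsUnique_right
  have hinj : σ.Injective := fun a a' h =>
    (hM.existsUnique_left (σ a)).unique (hσ a) (h ▸ hσ a')
  have hsurj : σ.Surjective := fun b => by
    obtain ⟨a, ha, -⟩ := hM.existsUnique_left b
    exact ⟨a, (huniq a b ha).symm⟩
  exact ⟨Equiv.ofBijective σ ⟨hinj, hsurj⟩, hσ⟩

end CompleteBipartite

namespace Equiv.Perm

/-- The even derangements of a 4-element set are the three double transpositions. -/
lemma apply_apply_eq_of_sign_eq_one_of_forall_apply_ne {τ : Perm (Fin 4)} (hτ : sign τ = 1)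
    (hfix : ∀ x, τ x ≠ x) (x : Fin 4) : τ (τ x) = x := by
  revert τ x
  decide

lemma exists_swap_of_sign_eq_of_forall_apply_ne {σ ρ : Perm (Fin 4)} (hsign : sign σ = sign ρ)
    (hne : ∀ a, σ a ≠ ρ a) : ∃ a a', a ≠ a' ∧ σ a = ρ a' ∧ σ a' = ρ a := by
  set τ := ρ⁻¹ * σ
  have hρτ (a : Fin 4) : ρ (τ a) = σ a := by simp [τ]
  have hτ : sign τ = 1 := by simp [τ, hsign]
  have hfix (a : Fin 4) : τ a ≠ a := fun h => hne a (by rw [← hρτ, h])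
  refine ⟨0, τ 0, (hfix 0).symm, (hρτ 0).symm, ?_⟩
  rw [← hρτ, apply_apply_eq_of_sign_eq_one_of_forall_apply_ne hτ hfix]

end Equiv.Perm

/-- every 1-factorization of `K₄,₄` has a 4-cycle whose four edges lie
in only two of the four 1-factors (opposite edges in the same 1-factor); in particular
no 1-factorization of `K₄,₄` is rainbow on all 4-cycles. -/
theorem stmt10 : ∀ F : Fin 4 → Set (Sym2 (Fin 4 ⊕ Fin 4)),
    IsOneFactorization K44 F →
    ∃ a b c d : Fin 4 ⊕ Fin 4, IsC4 K44 a b c d ∧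
      ∃ i j : Fin 4, i ≠ j ∧
        s(a, b) ∈ F i ∧ s(c, d) ∈ F i ∧ s(b, c) ∈ F j ∧ s(d, a) ∈ F j := by
  intro F hF
  choose σ hσ using fun i => (hF.1 i).exists_equiv
  obtain ⟨i, j, hij, hsign⟩ :=
    Fintype.exists_ne_map_eq_of_card_lt (fun i => Equiv.Perm.sign (σ i)) (by simp)
  have hne (a : Fin 4) : σ i a ≠ σ j a := fun h => hij (hF.eq_of_mem_of_mem (hσ i a) (h ▸ hσ j a))
  obtain ⟨a, a', haa', h₁, h₂⟩ := Equiv.Perm.exists_swap_of_sign_eq_of_forall_apply_ne hsign hne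
  refine ⟨inl a, inr (σ i a), inl a', inr (σ i a'),
    isC4_completeBipartiteGraph_iff.2 ⟨haa', (σ i).injective.ne haa'⟩,
    i, j, hij, hσ i a, hσ i a', ?_, ?_⟩
  · rw [Sym2.eq_swap, h₁]
    exact hσ j a'
  · rw [Sym2.eq_swap, h₂]
    exact hσ j a
end

section
/- Every perfect matching of the 4-cube graph Q₄ that is invariant under the antipodal map x ↦ x + (1,1,1,1) (i.e., the antipodal map sends the matching's edge set onto itself) projects, under the antipodal quotient map from Q₄ onto K₄,₄, to a perfect matching of K₄,₄. -/
variable {V : Type*}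

section

variable {W : Type*} {G : SimpleGraph V} {H : SimpleGraph W}

theorem IsPM.map_of_invariant {φ : G →g H} {σ : V → V} (hsurj : Function.Surjective φ)
    (hconst : ∀ x, φ (σ x) = φ x) (hfib : ∀ x y, φ x = φ y → y = x ∨ y = σ x)
    {M : Set (Sym2 V)} (hM : IsPM G M) (hMσ : Sym2.map σ '' M ⊆ M) :
    IsPM H (Sym2.map φ '' M) := by
  obtain ⟨hMG, huniq⟩ := hM
  have hmap_σ : ∀ f, Sym2.map φ (Sym2.map σ f) = Sym2.map φ f := fun f => by
    rw [Sym2.map_map]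
    exact congrArg (Sym2.map · f) (funext hconst)
  refine ⟨?_, fun u => ?_⟩
  · rintro _ ⟨f, hf, rfl⟩
    exact φ.map_mem_edgeSet (hMG hf)
  obtain ⟨x, rfl⟩ := hsurj u
  obtain ⟨e, ⟨he, hxe⟩, he_uniq⟩ := huniq x
  refine ⟨Sym2.map φ e, ⟨⟨e, he, rfl⟩, Sym2.mem_map.2 ⟨x, hxe, rfl⟩⟩, ?_⟩
  rintro _ ⟨⟨f, hf, rfl⟩, hxf⟩
  obtain ⟨y, hyf, hy⟩ := Sym2.mem_map.1 hxf
  rcases hfib y x hy with rfl | rfl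
  · rw [he_uniq f ⟨hf, hyf⟩]
  · have hσf : Sym2.map σ f = e := he_uniq _ ⟨hMσ ⟨f, hf, rfl⟩, Sym2.mem_map.2 ⟨y, hyf, rfl⟩⟩
    rw [← hσf, hmap_σ]

end

/-- every perfect matching of `Q4` that is invariant under the antipodal
map `x ↦ x + (1,1,1,1)` projects, under the antipodal quotient map from `Q4` onto
`K₄,₄` (any map `φ` identifying exactly the antipodal pairs and inducing the adjacency
of `K₄,₄` from that of `Q4`), to a perfect matching of `K₄,₄`. -/
theorem stmt11 (φ : (Fin 4 → ZMod 2) → (Fin 4 ⊕ Fin 4))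
    (hsurj : Function.Surjective φ)
    (hconst : ∀ x, φ (x + antip) = φ x)
    (hfib : ∀ x y, φ x = φ y → y = x ∨ y = x + antip)
    (hadj : ∀ u v : Fin 4 ⊕ Fin 4, K44.Adj u v ↔ ∃ x y, φ x = u ∧ φ y = v ∧ Q4.Adj x y)
    (M : Set (Sym2 (Fin 4 → ZMod 2)))
    (hM : IsPM Q4 M)
    (hMinv : Sym2.map (fun x => x + antip) '' M = M) :
    IsPM K44 (Sym2.map φ '' M) := by
  let φQ : Q4 →g K44 := ⟨φ, fun {x y} hxy => (hadj _ _).2 ⟨x, y, rfl, rfl, hxy⟩⟩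
  exact hM.map_of_invariant (φ := φQ) hsurj hconst hfib hMinv.subset
end
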